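/- For all n ≥ 2, the nested designs X_n generated by the greedy-packing algorithm satisfy SR(X_n) = CR(X_{n-1})/2. -/

import Mathlib

/-!
Each greedy point `x j` is at distance at least `CR(X_j)` from every earlier point, with equality
for its nearest predecessor, and the fill distance only decreases as the design grows. Hence
distinct points of `X_{m+1}` are at least `CR(X_m)` apart, and `x m` together with its nearest
predecessor attains this bound.
-/

open Metric Set MeasureTheory

/-- Distance from a point `x` to the nearest point of the design `D`. -/
noncomputable def minDist {E : Type*} [NormedAddCommGroup E] (D : Finset E) (x : E) : ℝ :=
  sInf ((fun p => dist x p) '' (D : Set E))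

/-- Fill distance (covering radius) of the design `D` for the set `A`:
`CR_A(D) = sup_{x ∈ A} min_{p ∈ D} ‖x - p‖`. -/
noncomputable def fillDist {E : Type*} [NormedAddCommGroup E] (A : Set E) (D : Finset E) : ℝ :=
  sSup ((fun x => minDist D x) '' A)

/-- Separation radius of the design `D`:
`SR(D) = (1/2) min_{p ≠ q ∈ D} ‖p - q‖`. -/
noncomputable def sepRad {E : Type*} [NormedAddCommGroup E] (D : Finset E) : ℝ :=
  (1 / 2) * sInf ((fun p : E × E => dist p.1 p.2) '' {p | p.1 ∈ D ∧ p.2 ∈ D ∧ p.1 ≠ p.2})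

/-- Mesh-ratio of the design `D` for the set `A`: `MR(D) = CR_A(D) / SR(D)`. -/
noncomputable def meshRatio {E : Type*} [NormedAddCommGroup E] (A : Set E) (D : Finset E) : ℝ :=
  fillDist A D / sepRad D

/-- The nested design consisting of the first `n` points of the sequence `x`. -/
noncomputable def design {E : Type*} (x : ℕ → E) (n : ℕ) : Finset E :=
  letI := Classical.decEq E
  (Finset.range n).image x

section FillDistance

variable {E : Type*} [NormedAddCommGroup E]

lemma minDist_nonneg (D : Finset E) (y : E) : 0 ≤ minDist D y :=
  Real.sInf_nonneg (by rintro _ ⟨p, -, rfl⟩; exact dist_nonneg)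

lemma minDist_le {D : Finset E} {y p : E} (hp : p ∈ D) : minDist D y ≤ dist y p :=
  csInf_le (D.finite_toSet.image _).bddBelow ⟨p, hp, rfl⟩

lemma exists_mem_minDist_eq {D : Finset E} (hD : D.Nonempty) (y : E) :
    ∃ p ∈ D, minDist D y = dist y p := by
  obtain ⟨p, hp, hpy⟩ :=
    ((Finset.coe_nonempty.mpr hD).image (dist y)).csInf_mem (D.finite_toSet.image _)
  exact ⟨p, hp, hpy.symm⟩

lemma minDist_anti {D D' : Finset E} (h : D ⊆ D') (hD : D.Nonempty) (y : E) :
    minDist D' y ≤ minDist D y := by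
  obtain ⟨p, hp, hpy⟩ := exists_mem_minDist_eq hD y
  exact hpy ▸ minDist_le (h hp)

lemma fillDist_nonneg (A : Set E) (D : Finset E) : 0 ≤ fillDist A D :=
  Real.sSup_nonneg (by rintro _ ⟨y, -, rfl⟩; exact minDist_nonneg D y)

lemma minDist_le_fillDist {A : Set E} (hA : Bornology.IsBounded A) {D : Finset E}
    (hD : D.Nonempty) {y : E} (hy : y ∈ A) : minDist D y ≤ fillDist A D := by
  obtain ⟨p, hp⟩ := hD
  obtain ⟨r, hr⟩ := hA.subset_closedBall p
  refine le_csSup ⟨r, ?_⟩ ⟨y, hy, rfl⟩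
  rintro _ ⟨z, hz, rfl⟩
  exact (minDist_le hp).trans (mem_closedBall.mp (hr hz))

lemma fillDist_anti {A : Set E} (hA : Bornology.IsBounded A) {D D' : Finset E} (h : D ⊆ D')
    (hD : D.Nonempty) : fillDist A D' ≤ fillDist A D :=
  Real.sSup_le (by
    rintro _ ⟨y, hy, rfl⟩
    exact (minDist_anti h hD y).trans (minDist_le_fillDist hA hD hy)) (fillDist_nonneg A D)

lemma sepRad_eq_of_isLeast {D : Finset E} {c : ℝ}
    (h : IsLeast
      ((fun p : E × E => dist p.1 p.2) '' {p | p.1 ∈ D ∧ p.2 ∈ D ∧ p.1 ≠ p.2}) c) :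
    sepRad D = c / 2 := by
  rw [sepRad, h.csInf_eq]
  ring

end FillDistance

section Nested

variable {E : Type*}

lemma mem_design_iff {x : ℕ → E} {n : ℕ} {p : E} :
    p ∈ design x n ↔ ∃ i < n, x i = p := by
  simp [design]

lemma design_mono (x : ℕ → E) : Monotone (design x) := by
  intro a b hab p hp
  obtain ⟨i, hi, rfl⟩ := mem_design_iff.mp hp
  exact mem_design_iff.mpr ⟨i, hi.trans_le hab, rfl⟩

end Nested

section Greedy

variable {E : Type*} [NormedAddCommGroup E] {S : Set E} {x : ℕ → E}

lemma fillDist_le_dist_of_greedy (hS : Bornology.IsBounded S) {i j m : ℕ}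
    (hj : minDist (design x j) (x j) = fillDist S (design x j)) (hij : i < j) (hjm : j ≤ m) :
    fillDist S (design x m) ≤ dist (x i) (x j) :=
  calc fillDist S (design x m)
      ≤ fillDist S (design x j) :=
        fillDist_anti hS (design_mono x hjm) ⟨x i, mem_design_iff.mpr ⟨i, hij, rfl⟩⟩
    _ = minDist (design x j) (x j) := hj.symm
    _ ≤ dist (x j) (x i) := minDist_le (mem_design_iff.mpr ⟨i, hij, rfl⟩)
    _ = dist (x i) (x j) := dist_comm _ _

lemma exists_dist_eq_fillDist_of_greedy {m : ℕ}
    (hm : minDist (design x m) (x m) = fillDist S (design x m)) (hm_pos : 1 ≤ m) :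
    ∃ i < m, dist (x m) (x i) = fillDist S (design x m) := by
  obtain ⟨p, hp, hpm⟩ :=
    exists_mem_minDist_eq ⟨x 0, mem_design_iff.mpr ⟨0, hm_pos, rfl⟩⟩ (x m)
  obtain ⟨i, hi, rfl⟩ := mem_design_iff.mp hp
  exact ⟨i, hi, hpm ▸ hm⟩

end Greedy

theorem statement5_general
    {E : Type*} [NormedAddCommGroup E]
    (S : Set E) (hS : IsCompact S)
    (x : ℕ → E) (hinj : Function.Injective x)
    (hgreedy : ∀ k : ℕ, 1 ≤ k →
      x k ∈ S ∧ minDist (design x k) (x k) = fillDist S (design x k))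
    (n : ℕ) (hn : 2 ≤ n) :
    sepRad (design x n) = fillDist S (design x (n - 1)) / 2 := by
  obtain ⟨m, rfl⟩ : ∃ m, n = m + 1 := ⟨n - 1, by omega⟩
  rw [Nat.add_sub_cancel]
  apply sepRad_eq_of_isLeast
  constructor
  · obtain ⟨i, hi, hdist⟩ :=
      exists_dist_eq_fillDist_of_greedy (hgreedy m (by omega)).2 (by omega)
    exact ⟨(x m, x i), ⟨mem_design_iff.mpr ⟨m, by omega, rfl⟩,
      mem_design_iff.mpr ⟨i, by omega, rfl⟩, fun h => hi.ne' (hinj h)⟩, hdist⟩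
  · rintro _ ⟨⟨p, q⟩, ⟨hp, hq, hpq⟩, rfl⟩
    obtain ⟨i, hi, rfl⟩ := mem_design_iff.mp hp
    obtain ⟨j, hj, rfl⟩ := mem_design_iff.mp hq
    dsimp only
    rcases lt_or_gt_of_ne (ne_of_apply_ne x hpq) with hij | hji
    · exact fillDist_le_dist_of_greedy hS.isBounded (hgreedy j (by omega)).2 hij (by omega)
    · rw [dist_comm]
      exact fillDist_le_dist_of_greedy hS.isBounded (hgreedy i (by omega)).2 hji (by omega)

/-- For all `n ≥ 2`, the nested designs `Xₙ` generated by the greedy-packing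
algorithm (each new point `x (k)` maximizes over `S` the distance to the current design, i.e.
`min_{x_i ∈ X_k} ‖x_{k+1} − x_i‖ = CR(X_k)`) satisfy `SR(Xₙ) = CR(X_{n−1})/2`. -/
theorem statement5 {d : ℕ} (hd : 1 ≤ d)
    {E : Type*} [NormedAddCommGroup E] [NormedSpace ℝ E] [FiniteDimensional ℝ E]
    (hdim : Module.finrank ℝ E = d)
    (S : Set E) (hS : IsCompact S)
    (x : ℕ → E) (hinj : Function.Injective x) (hx0 : x 0 ∈ S)
    (hgreedy : ∀ k : ℕ, 1 ≤ k →
      x k ∈ S ∧ minDist (design x k) (x k) = fillDist S (design x k))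
    (n : ℕ) (hn : 2 ≤ n) :
    sepRad (design x n) = fillDist S (design x (n - 1)) / 2 :=
  statement5_general S hS x hinj hgreedy n hn
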